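/- For 1 < β < 2, the Ortigueira coefficients ω_k^{(β)} = (-1)^k Γ(β+1) cos(βπ/2)/(Γ(β/2-k+1)Γ(β/2+k+1)) satisfy ω_0^{(β)} < 0 and ω_k^{(β)} > 0 for all k ≥ 1. -/

import Mathlib

/-!
For `k ≥ 1` the argument `β/2 - k + 1` of the first Gamma factor lies in `(1 - k, 2 - k)`, where
`Γ` has sign `(-1)^(k-1)` (push it down from `(0, 1)` with `Γ(s + 1) = s Γ(s)`). This cancels the
alternating factor `(-1)^k` up to one minus sign, which `cos(βπ/2) < 0` absorbs; for `k = 0` every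
Gamma factor is positive and the sign is that of the cosine.
-/

open Real

/-- Ortigueira's centred-difference coefficients
`ω_k^{(β)} = (-1)^k Γ(β+1) cos(βπ/2) / (Γ(β/2 - k + 1) Γ(β/2 + k + 1))`. -/
noncomputable def ortW (β : ℝ) (k : ℕ) : ℝ :=
  (-1 : ℝ) ^ k * Real.Gamma (β + 1) * Real.cos (β * Real.pi / 2) /
    (Real.Gamma (β / 2 - k + 1) * Real.Gamma (β / 2 + k + 1))

namespace Real

theorem neg_one_pow_mul_Gamma_sub_natCast_pos {a : ℝ} (ha₀ : 0 < a) (ha₁ : a < 1) (n : ℕ) :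
    0 < (-1) ^ n * Gamma (a - n) := by
  induction n with
  | zero => simpa using Gamma_pos_of_pos ha₀
  | succ n ih =>
    have hlt : a - (n + 1) < 0 := by linarith [(n.cast_nonneg : (0 : ℝ) ≤ n)]
    have hrec : Gamma (a - n) = (a - (n + 1)) * Gamma (a - (n + 1)) := by
      rw [← Gamma_add_one hlt.ne]; ring_nf
    rw [hrec, show (-1 : ℝ) ^ n * ((a - (n + 1)) * Gamma (a - (n + 1)))
      = (n + 1 - a) * ((-1) ^ (n + 1) * Gamma (a - (n + 1))) by ring] at ih
    push_cast
    exact pos_of_mul_pos_right ih (by linarith)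

end Real

theorem ortW_succ (β : ℝ) (n : ℕ) :
    ortW β (n + 1) = Gamma (β + 1) * -cos (β * π / 2) /
      ((-1) ^ n * Gamma (β / 2 - n) * Gamma (β / 2 + (n + 1) + 1)) := by
  have hinv : ((-1 : ℝ) ^ n)⁻¹ = (-1) ^ n := by rw [← inv_pow, inv_neg_one]
  unfold ortW
  push_cast
  rw [show β / 2 - (n + 1) + 1 = β / 2 - n by ring]
  simp only [div_eq_mul_inv, mul_inv, hinv, pow_succ]
  ring

/-- For `1 < β < 2`: `ω_0 < 0` and `ω_k > 0` for all `k ≥ 1`. -/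
theorem ortW_signs (β : ℝ) (hβ1 : 1 < β) (hβ2 : β < 2) :
    ortW β 0 < 0 ∧ ∀ k : ℕ, 1 ≤ k → 0 < ortW β k := by
  have hcos : cos (β * π / 2) < 0 :=
    cos_neg_of_pi_div_two_lt_of_lt (by nlinarith [pi_pos]) (by nlinarith [pi_pos])
  have hΓ : 0 < Gamma (β + 1) := Gamma_pos_of_pos (by linarith)
  refine ⟨?_, fun k hk => ?_⟩
  · have : 0 < Gamma (β / 2 + 1) := Gamma_pos_of_pos (by linarith)
    simp only [ortW, pow_zero, one_mul, Nat.cast_zero, sub_zero, add_zero]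
    exact div_neg_of_neg_of_pos (mul_neg_of_pos_of_neg hΓ hcos) (by positivity)
  · obtain ⟨n, rfl⟩ := Nat.exists_eq_add_of_le' hk
    have hsign := neg_one_pow_mul_Gamma_sub_natCast_pos (a := β / 2) (by linarith) (by linarith) n
    have : 0 < Gamma (β / 2 + (n + 1) + 1) := Gamma_pos_of_pos (by positivity)
    have : 0 < -cos (β * π / 2) := by linarith
    rw [ortW_succ]
    positivity
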